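/- arXiv:1711.06395 — 3 statements merged into one kernel-verified Lean document; each statement's English description precedes it below -/
import Mathlib

section
/- Let n ≥ 1, f, g ∈ 𝒮(ℝⁿ), and fix a sign ±. Then for all x, ξ ∈ ℝⁿ, |V_g[t ↦ e^{±i|t|²} f(t)](x,ξ)| = |V_{t ↦ g(t)e^{∓i|t|²}} f(x, ξ ∓ 2x)|, i.e., the modulus of the short-time Fourier transform of e^{±i|·|²}f with window g at (x,ξ) equals the modulus of the short-time Fourier transform of f with window g·e^{∓i|·|²} at (x, ξ ∓ 2x). -/
open MeasureTheory Real
open scoped ENNReal RealInnerProductSpace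

noncomputable section

/-- The short-time Fourier transform
`V_g f (x, ξ) = ∫ e^{-i ξ·t} conj (g (t - x)) f t dt`. -/
def STFT {n : ℕ} (g f : EuclideanSpace ℝ (Fin n) → ℂ)
    (x ξ : EuclideanSpace ℝ (Fin n)) : ℂ :=
  ∫ t : EuclideanSpace ℝ (Fin n),
    Complex.exp (-(Complex.I * Complex.ofReal ⟪ξ, t⟫)) * (starRingEnd ℂ) (g (t - x)) * f t

/-- The Fourier transform `f̂ (ξ) = ∫ e^{-i ξ·x} f x dx`. -/
def FT {n : ℕ} (f : EuclideanSpace ℝ (Fin n) → ℂ) (ξ : EuclideanSpace ℝ (Fin n)) : ℂ :=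
  ∫ x : EuclideanSpace ℝ (Fin n),
    Complex.exp (-(Complex.I * Complex.ofReal ⟪ξ, x⟫)) * f x

/-- The power of the Japanese bracket `⟨x⟩ˢ = (1 + |x|²)^(s/2)`. -/
def jp {n : ℕ} (s : ℝ) (x : EuclideanSpace ℝ (Fin n)) : ℝ := (1 + ‖x‖ ^ 2) ^ (s / 2)

/-- The Gaussian window `g₀ (t) = e^{-|t|²}`. -/
def gauss {n : ℕ} (t : EuclideanSpace ℝ (Fin n)) : ℂ := Complex.ofReal (Real.exp (-‖t‖ ^ 2))

/-- The `L^p` norm (valued in `ℝ≥0∞`) of an `ℝ≥0∞`-valued function. -/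
def lpN {n : ℕ} (p : ℝ≥0∞) (F : EuclideanSpace ℝ (Fin n) → ℝ≥0∞) : ℝ≥0∞ :=
  if p = ∞ then essSup F volume
  else (∫⁻ x, F x ^ p.toReal) ^ p.toReal⁻¹

/-- The Wiener amalgam space norm `‖f‖_{W^s_{p,q}}`:
inner `L^q` norm in the frequency variable ξ, outer `L^p` norm in the space variable x,
with the Gaussian window. -/
def WNorm {n : ℕ} (s : ℝ) (p q : ℝ≥0∞) (f : EuclideanSpace ℝ (Fin n) → ℂ) : ℝ≥0∞ :=
  lpN p (fun x => lpN q (fun ξ => ENNReal.ofReal (jp s ξ) * (‖STFT gauss f x ξ‖₊ : ℝ≥0∞)))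

/-- The modulation space norm `‖f‖_{M^s_{p,q}}`:
inner `L^p` norm in the space variable x, outer `L^q` norm in the frequency variable ξ,
with the Gaussian window. -/
def MNorm {n : ℕ} (s : ℝ) (p q : ℝ≥0∞) (f : EuclideanSpace ℝ (Fin n) → ℂ) : ℝ≥0∞ :=
  lpN q (fun ξ => lpN p (fun x => ENNReal.ofReal (jp s ξ) * (‖STFT gauss f x ξ‖₊ : ℝ≥0∞)))

/-- The Schrödinger operator `e^{iεΔ} f = ℱ⁻¹ [ξ ↦ e^{-iε|ξ|²} f̂ (ξ)]` (`ε = ±1`). -/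
def schrod {n : ℕ} (ε : ℝ) (f : EuclideanSpace ℝ (Fin n) → ℂ)
    (x : EuclideanSpace ℝ (Fin n)) : ℂ :=
  (((2 * Real.pi) ^ n)⁻¹ : ℝ) *
    ∫ ξ : EuclideanSpace ℝ (Fin n),
      Complex.exp (Complex.I * Complex.ofReal ⟪x, ξ⟫) *
        Complex.exp (-(Complex.ofReal ε * Complex.I * Complex.ofReal (‖ξ‖ ^ 2))) * FT f ξ

/-- The lattice point `k ∈ ℤⁿ` viewed as a point of `ℝⁿ`. -/
def zlift {n : ℕ} (k : Fin n → ℤ) : EuclideanSpace ℝ (Fin n) :=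
  (WithLp.equiv 2 (Fin n → ℝ)).symm fun i => (k i : ℝ)


/-- For `f, g ∈ 𝒮(ℝⁿ)` and a sign `ε = ±1`,
`|V_g [e^{εi|·|²} f] (x, ξ)| = |V_{g · e^{-εi|·|²}} f (x, ξ - 2εx)|`. -/
theorem stft_modulus_chirp (n : ℕ) (hn : 1 ≤ n)
    (f g : SchwartzMap (EuclideanSpace ℝ (Fin n)) ℂ) (ε : ℝ) (hε : ε = 1 ∨ ε = -1)
    (x ξ : EuclideanSpace ℝ (Fin n)) :
    ‖STFT ⇑g (fun t => Complex.exp (Complex.ofReal ε * Complex.I * Complex.ofReal (‖t‖ ^ 2))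
        * f t) x ξ‖
      = ‖STFT (fun t => g t *
            Complex.exp (-(Complex.ofReal ε * Complex.I * Complex.ofReal (‖t‖ ^ 2))))
          ⇑f x (ξ - (2 * ε) • x)‖ := by
  have key : STFT ⇑g (fun t => Complex.exp (Complex.ofReal ε * Complex.I * Complex.ofReal (‖t‖ ^ 2))
        * f t) x ξ
      = Complex.exp (-(Complex.ofReal ε * Complex.I * Complex.ofReal (‖x‖ ^ 2))) *
        STFT (fun t => g t *
            Complex.exp (-(Complex.ofReal ε * Complex.I * Complex.ofReal (‖t‖ ^ 2))))
          ⇑f x (ξ - (2 * ε) • x) := by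
    unfold STFT
    rw [← integral_const_mul]
    congr 1
    ext t
    have h1 : ⟪ξ - (2 * ε) • x, t⟫ = ⟪ξ, t⟫ - 2 * ε * ⟪x, t⟫ := by
      simp [inner_sub_left, real_inner_smul_left, PiLp.inner_apply, Finset.mul_sum, mul_assoc]
      exact Finset.sum_congr rfl fun _ _ => by ring
    have h2 : ‖t - x‖ ^ 2 = ‖t‖ ^ 2 - 2 * ⟪x, t⟫ + ‖x‖ ^ 2 := by
      rw [norm_sub_sq_real, real_inner_comm]
    have hconj : (starRingEnd ℂ)
        (Complex.exp (-(Complex.ofReal ε * Complex.I * Complex.ofReal (‖t - x‖ ^ 2))))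
        = Complex.exp (Complex.ofReal ε * Complex.I * Complex.ofReal (‖t - x‖ ^ 2)) := by
      rw [← Complex.exp_conj]
      congr 1
      simp [Complex.conj_I]
    rw [map_mul, hconj]
    have hexp : Complex.exp (-(Complex.I * Complex.ofReal ⟪ξ, t⟫)) *
        Complex.exp (Complex.ofReal ε * Complex.I * Complex.ofReal (‖t‖ ^ 2))
        = Complex.exp (-(Complex.ofReal ε * Complex.I * Complex.ofReal (‖x‖ ^ 2))) *
          Complex.exp (-(Complex.I * Complex.ofReal ⟪ξ - (2 * ε) • x, t⟫)) *
          Complex.exp (Complex.ofReal ε * Complex.I * Complex.ofReal (‖t - x‖ ^ 2)) := by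
      rw [← Complex.exp_add, ← Complex.exp_add, ← Complex.exp_add]
      congr 1
      rw [h1, h2]
      push_cast
      ring
    linear_combination ((starRingEnd ℂ) (g (t - x)) * f t) * hexp
  rw [key, norm_mul]
  have : ‖Complex.exp (-(Complex.ofReal ε * Complex.I * Complex.ofReal (‖x‖ ^ 2)))‖ = 1 := by
    rw [Complex.norm_exp]
    simp [Complex.mul_re]
    exact Or.inr (by simp [← Complex.ofReal_pow])
  rw [this, one_mul]


end
end

section
/- Let n ≥ 1 and 1 ≤ p, q < ∞. Let φ ∈ 𝒮(ℝⁿ) satisfy supp φ ⊂ [−1/8, 1/8]ⁿ and |φ̂(ξ)| ≥ c > 0 for all ξ ∈ [−3/8, 3/8]ⁿ for some constant c > 0, and let ψ ∈ 𝒮(ℝⁿ) satisfy supp ψ ⊂ [−3/8, 3/8]ⁿ and ψ ≡ 1 on [−1/4, 1/4]ⁿ. Fix a sign ±. Then there exists a constant C > 0 such that for every finitely supported sequence {c_ℓ}_{ℓ∈ℤⁿ} of complex numbers, setting f(t) = Σ_{ℓ∈ℤⁿ} c_ℓ φ(t − ℓ), one has ( ∫_{ℝⁿ} ( ∫_{ℝⁿ}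 |V_ψ f(x, ξ ∓ 2x)|^q dx )^{p/q} dξ )^{1/p} ≥ C (Σ_{m∈ℤⁿ} |c_m|^p)^{1/p}. -/
open MeasureTheory Real
open scoped ENNReal RealInnerProductSpace

noncomputable section

lemma cube_eq {n : ℕ} (a : EuclideanSpace ℝ (Fin n)) (r : ℝ) :
    {x : EuclideanSpace ℝ (Fin n) | ∀ i, |x i - a i| ≤ r}
      = ((MeasurableEquiv.toLp 2 (Fin n → ℝ)).symm) ⁻¹'
          (Set.univ.pi fun i => Set.Icc (a i - r) (a i + r)) := by
  ext x
  simp only [Set.mem_setOf_eq, Set.mem_preimage, Set.mem_pi, Set.mem_univ, forall_true_left,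
    Set.mem_Icc]
  refine forall_congr' fun i => ?_
  have : ((MeasurableEquiv.toLp 2 (Fin n → ℝ)).symm) x i = x i := rfl
  rw [this, abs_le]
  constructor <;> intro h <;> constructor <;> linarith [h.1, h.2]

lemma cube_meas {n : ℕ} (a : EuclideanSpace ℝ (Fin n)) (r : ℝ) :
    MeasurableSet {x : EuclideanSpace ℝ (Fin n) | ∀ i, |x i - a i| ≤ r} := by
  rw [cube_eq]
  exact ((MeasurableEquiv.toLp 2 (Fin n → ℝ)).symm).measurable
    (MeasurableSet.univ_pi fun i => measurableSet_Icc)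

lemma cube_vol {n : ℕ} (a : EuclideanSpace ℝ (Fin n)) (r : ℝ) (hr : 0 ≤ r) :
    volume {x : EuclideanSpace ℝ (Fin n) | ∀ i, |x i - a i| ≤ r}
      = ENNReal.ofReal ((2 * r) ^ n) := by
  rw [cube_eq, (EuclideanSpace.volume_preserving_symm_measurableEquiv_toLp (Fin n)).measure_preimage
    ((MeasurableSet.univ_pi fun i => measurableSet_Icc).nullMeasurableSet)]
  rw [volume_pi_pi]
  have : ∀ i : Fin n, volume (Set.Icc (a i - r) (a i + r)) = ENNReal.ofReal (2 * r) := by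
    intro i
    rw [Real.volume_Icc]
    congr 1
    ring
  simp only [this, Finset.prod_const, Finset.card_univ, Fintype.card_fin]
  rw [← ENNReal.ofReal_pow (by linarith)]

lemma stft_formula {n : ℕ} (φ ψ : SchwartzMap (EuclideanSpace ℝ (Fin n)) ℂ)
    (hφsupp : tsupport ⇑φ ⊆ {x : EuclideanSpace ℝ (Fin n) | ∀ i, |x i| ≤ 1 / 8})
    (hψsupp : tsupport ⇑ψ ⊆ {x : EuclideanSpace ℝ (Fin n) | ∀ i, |x i| ≤ 3 / 8})
    (hψone : ∀ x : EuclideanSpace ℝ (Fin n), (∀ i, |x i| ≤ 1 / 4) → ψ x = 1)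
    (c : (Fin n → ℤ) →₀ ℂ) (ℓ : Fin n → ℤ) (hℓ : ℓ ∈ c.support)
    (x : EuclideanSpace ℝ (Fin n)) (hx : ∀ i, |x i - (ℓ i : ℝ)| ≤ 1 / 16)
    (η : EuclideanSpace ℝ (Fin n)) :
    STFT ⇑ψ (fun t => ∑ ℓ' ∈ c.support, c ℓ' * φ (t - zlift ℓ')) x η
      = c ℓ * (Complex.exp (-(Complex.I * Complex.ofReal ⟪η, zlift ℓ⟫)) * FT ⇑φ η) := by
  have hz : ∀ (k : Fin n → ℤ) (i : Fin n), (zlift k : EuclideanSpace ℝ (Fin n)) i = (k i : ℝ) :=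
    fun _ _ => rfl
  have hsub : ∀ (u v : EuclideanSpace ℝ (Fin n)) (i : Fin n), (u - v) i = u i - v i :=
    fun _ _ _ => rfl
  have hsum : ∀ t : EuclideanSpace ℝ (Fin n),
      (starRingEnd ℂ) (ψ (t - x)) * ∑ ℓ' ∈ c.support, c ℓ' * φ (t - zlift ℓ')
        = c ℓ * φ (t - zlift ℓ) := by
    intro t
    rw [Finset.mul_sum, Finset.sum_eq_single_of_mem ℓ hℓ]
    · by_cases h : φ (t - zlift ℓ) = 0
      · simp [h]
      · have ht : ∀ i, |(t - zlift ℓ) i| ≤ 1 / 8 := hφsupp (subset_tsupport _ h)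
        have : ψ (t - x) = 1 := by
          refine hψone _ fun i => ?_
          have h1 := ht i
          have h2 := hx i
          rw [hsub, hz] at h1
          rw [hsub]
          have : t i - x i = (t i - (ℓ i : ℝ)) - (x i - (ℓ i : ℝ)) := by ring
          rw [this]
          calc |(t i - (ℓ i : ℝ)) - (x i - (ℓ i : ℝ))| ≤ |t i - (ℓ i : ℝ)| + |x i - (ℓ i : ℝ)| :=
            abs_sub _ _
          _ ≤ 1 / 4 := by linarith
        rw [this]
        simp
    · intro ℓ' _ hne
      by_cases h : φ (t - zlift ℓ') = 0
      · simp [h]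
      · have ht : ∀ i, |(t - zlift ℓ') i| ≤ 1 / 8 := hφsupp (subset_tsupport _ h)
        obtain ⟨i, hi⟩ : ∃ i, ℓ i ≠ ℓ' i := by
          by_contra hcon
          push_neg at hcon
          exact hne (funext fun j => (hcon j).symm)
        have h1 : (1 : ℝ) ≤ |(ℓ i : ℝ) - (ℓ' i : ℝ)| := by
          rw [← Int.cast_sub, ← Int.cast_abs]
          exact_mod_cast Int.one_le_abs (sub_ne_zero.mpr hi)
        have h2 := ht i
        rw [hsub, hz] at h2
        have h3 := hx i
        have hout : t - x ∉ tsupport ⇑ψ := by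
          intro hmem
          have h4 := hψsupp hmem i
          rw [hsub] at h4
          have : |(ℓ i : ℝ) - (ℓ' i : ℝ)| ≤ |t i - (ℓ' i : ℝ)| + |x i - (ℓ i : ℝ)| + |t i - x i| := by
            have : (ℓ i : ℝ) - (ℓ' i : ℝ) = (t i - (ℓ' i : ℝ)) - (x i - (ℓ i : ℝ)) - (t i - x i) := by
              ring
            rw [this]
            calc |(t i - (ℓ' i : ℝ)) - (x i - (ℓ i : ℝ)) - (t i - x i)|
                ≤ |(t i - (ℓ' i : ℝ)) - (x i - (ℓ i : ℝ))| + |t i - x i| := abs_sub _ _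
            _ ≤ |t i - (ℓ' i : ℝ)| + |x i - (ℓ i : ℝ)| + |t i - x i| := by
                have := abs_sub (t i - (ℓ' i : ℝ)) (x i - (ℓ i : ℝ))
                linarith
          linarith
        have : ψ (t - x) = 0 := image_eq_zero_of_notMem_tsupport hout
        simp [this]
  unfold STFT
  have hfun : (fun t : EuclideanSpace ℝ (Fin n) =>
      Complex.exp (-(Complex.I * Complex.ofReal ⟪η, t⟫)) * (starRingEnd ℂ) (ψ (t - x)) *
        ∑ ℓ' ∈ c.support, c ℓ' * φ (t - zlift ℓ'))
      = fun t => c ℓ * (Complex.exp (-(Complex.I * Complex.ofReal ⟪η, t⟫)) * φ (t - zlift ℓ)) := by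
    funext t
    rw [mul_assoc, hsum t]
    ring
  rw [hfun, integral_const_mul]
  congr 1
  have h1 : ∀ t : EuclideanSpace ℝ (Fin n),
      Complex.exp (-(Complex.I * Complex.ofReal ⟪η, t⟫)) * φ (t - zlift ℓ)
        = Complex.exp (-(Complex.I * Complex.ofReal ⟪η, zlift ℓ⟫)) *
            (Complex.exp (-(Complex.I * Complex.ofReal ⟪η, t - zlift ℓ⟫)) * φ (t - zlift ℓ)) := by
    intro t
    rw [← mul_assoc, ← Complex.exp_add]
    congr 2
    have : ⟪η, t⟫ = ⟪η, zlift ℓ⟫ + ⟪η, t - zlift ℓ⟫ := by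
      rw [← inner_add_right]
      congr 1
      abel
    rw [this]
    push_cast
    ring
  have hfun2 : (fun t : EuclideanSpace ℝ (Fin n) =>
      Complex.exp (-(Complex.I * Complex.ofReal ⟪η, t⟫)) * φ (t - zlift ℓ))
      = fun t => Complex.exp (-(Complex.I * Complex.ofReal ⟪η, zlift ℓ⟫)) *
          (Complex.exp (-(Complex.I * Complex.ofReal ⟪η, t - zlift ℓ⟫)) * φ (t - zlift ℓ)) :=
    funext h1
  rw [hfun2, integral_const_mul]
  congr 1
  exact integral_sub_right_eq_self
    (fun t : EuclideanSpace ℝ (Fin n) =>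
      Complex.exp (-(Complex.I * Complex.ofReal ⟪η, t⟫)) * φ t) (zlift ℓ)

lemma norm_exp_neg_I_real (r : ℝ) : ‖Complex.exp (-(Complex.I * (r : ℂ)))‖ = 1 := by
  rw [Complex.norm_exp]
  have : (-(Complex.I * (r : ℂ))).re = 0 := by simp
  rw [this, Real.exp_zero]

/-- Step 1 of the key lemma: lower bound of the mixed norm of `V_ψ f (x, ξ ∓ 2x)` by the
`ℓ^p` norm of the coefficients, where `f = Σ_ℓ c_ℓ φ(· - ℓ)`. -/
theorem mixed_norm_lower_bound (n : ℕ) (hn : 1 ≤ n) (p q : ℝ) (hp : 1 ≤ p) (hq : 1 ≤ q)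
    (φ ψ : SchwartzMap (EuclideanSpace ℝ (Fin n)) ℂ) (cφ : ℝ) (hcφ : 0 < cφ)
    (hφsupp : tsupport ⇑φ ⊆ {x : EuclideanSpace ℝ (Fin n) | ∀ i, |x i| ≤ 1 / 8})
    (hφhat : ∀ ξ : EuclideanSpace ℝ (Fin n), (∀ i, |ξ i| ≤ 3 / 8) → cφ ≤ ‖FT ⇑φ ξ‖)
    (hψsupp : tsupport ⇑ψ ⊆ {x : EuclideanSpace ℝ (Fin n) | ∀ i, |x i| ≤ 3 / 8})
    (hψone : ∀ x : EuclideanSpace ℝ (Fin n), (∀ i, |x i| ≤ 1 / 4) → ψ x = 1)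
    (ε : ℝ) (hε : ε = 1 ∨ ε = -1) :
    ∃ C : ℝ, 0 < C ∧ ∀ c : (Fin n → ℤ) →₀ ℂ,
      ENNReal.ofReal (C * (∑ m ∈ c.support, ‖c m‖ ^ p) ^ (1 / p))
        ≤ (∫⁻ ξ : EuclideanSpace ℝ (Fin n),
            (∫⁻ x : EuclideanSpace ℝ (Fin n),
              (‖STFT ⇑ψ (fun t => ∑ ℓ ∈ c.support, c ℓ * φ (t - zlift ℓ))
                  x (ξ - (2 * ε) • x)‖₊ : ℝ≥0∞) ^ q) ^ (p / q)) ^ (1 / p) := by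
  classical
  have hp0 : (0:ℝ) < p := lt_of_lt_of_le one_pos hp
  have hq0 : (0:ℝ) < q := lt_of_lt_of_le one_pos hq
  have hεabs : |ε| = 1 := by rcases hε with h | h <;> simp [h]
  set K : ℝ := cφ ^ p * (((1:ℝ)/8) ^ n) ^ (p / q) * ((1:ℝ)/2) ^ n with hKdef
  have hKpos : 0 < K := by positivity
  refine ⟨K ^ (1 / p), by positivity, fun c => ?_⟩
  set f : EuclideanSpace ℝ (Fin n) → ℂ := fun t => ∑ ℓ ∈ c.support, c ℓ * φ (t - zlift ℓ)
    with hf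
  set Q : (Fin n → ℤ) → Set (EuclideanSpace ℝ (Fin n)) :=
    fun ℓ => {x | ∀ i, |x i - (zlift ℓ : EuclideanSpace ℝ (Fin n)) i| ≤ 1/16} with hQdef
  set R : (Fin n → ℤ) → Set (EuclideanSpace ℝ (Fin n)) :=
    fun ℓ => {ξ | ∀ i, |ξ i - ((2*ε) • (zlift ℓ : EuclideanSpace ℝ (Fin n))) i| ≤ 1/4}
    with hRdef
  have hz : ∀ (k : Fin n → ℤ) (i : Fin n), (zlift k : EuclideanSpace ℝ (Fin n)) i = (k i : ℝ) :=
    fun _ _ => rfl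
  have hsmul : ∀ (a : ℝ) (x : EuclideanSpace ℝ (Fin n)) (i : Fin n), (a • x) i = a * x i :=
    fun _ _ _ => rfl
  have hsub : ∀ (u v : EuclideanSpace ℝ (Fin n)) (i : Fin n), (u - v) i = u i - v i :=
    fun _ _ _ => rfl
  -- Step 1: pointwise lower bound on the STFT norm
  have h1 : ∀ ℓ ∈ c.support, ∀ ξ ∈ R ℓ, ∀ x ∈ Q ℓ,
      ENNReal.ofReal ((cφ * ‖c ℓ‖) ^ q)
        ≤ (‖STFT ⇑ψ f x (ξ - (2 * ε) • x)‖₊ : ℝ≥0∞) ^ q := by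
    intro ℓ hℓ ξ hξ x hx
    have hxQ : ∀ i, |x i - (ℓ i : ℝ)| ≤ 1 / 16 := by
      intro i; have := hx i; rwa [hz] at this
    have hη : ∀ i, |(ξ - (2 * ε) • x) i| ≤ 3 / 8 := by
      intro i
      have h2 := hξ i
      rw [hsmul, hz] at h2
      rw [hsub, hsmul]
      have e : ξ i - 2 * ε * x i = (ξ i - 2 * ε * (ℓ i : ℝ)) - (2 * ε) * (x i - (ℓ i : ℝ)) := by
        ring
      rw [e]
      have h3 : |(2 * ε) * (x i - (ℓ i : ℝ))| ≤ 1 / 8 := by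
        rw [abs_mul, abs_mul, hεabs, abs_two]
        have := hxQ i
        linarith
      calc |(ξ i - 2 * ε * (ℓ i : ℝ)) - (2 * ε) * (x i - (ℓ i : ℝ))|
          ≤ |ξ i - 2 * ε * (ℓ i : ℝ)| + |(2 * ε) * (x i - (ℓ i : ℝ))| := abs_sub _ _
      _ ≤ 3 / 8 := by linarith
    have hSTFT := stft_formula φ ψ hφsupp hψsupp hψone c ℓ hℓ x hxQ (ξ - (2 * ε) • x)
    have hnorm : cφ * ‖c ℓ‖ ≤ ‖STFT ⇑ψ f x (ξ - (2 * ε) • x)‖ := by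
      rw [hf, hSTFT, norm_mul, norm_mul, norm_exp_neg_I_real, one_mul, mul_comm cφ]
      exact mul_le_mul_of_nonneg_left (hφhat _ hη) (norm_nonneg _)
    calc ENNReal.ofReal ((cφ * ‖c ℓ‖) ^ q)
        = (ENNReal.ofReal (cφ * ‖c ℓ‖)) ^ q := by
          rw [← ENNReal.ofReal_rpow_of_nonneg (by positivity) hq0.le]
    _ ≤ (ENNReal.ofReal ‖STFT ⇑ψ f x (ξ - (2 * ε) • x)‖) ^ q := by
          exact ENNReal.rpow_le_rpow (ENNReal.ofReal_le_ofReal hnorm) hq0.le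
    _ = (‖STFT ⇑ψ f x (ξ - (2 * ε) • x)‖₊ : ℝ≥0∞) ^ q := by
          rw [ofReal_norm, enorm_eq_nnnorm]
  -- Step 2: inner integral lower bound
  have h2 : ∀ ℓ ∈ c.support, ∀ ξ ∈ R ℓ,
      ENNReal.ofReal ((cφ * ‖c ℓ‖) ^ q * ((1:ℝ)/8) ^ n)
        ≤ ∫⁻ x, (‖STFT ⇑ψ f x (ξ - (2 * ε) • x)‖₊ : ℝ≥0∞) ^ q := by
    intro ℓ hℓ ξ hξ
    have hvol : volume (Q ℓ) = ENNReal.ofReal (((1:ℝ)/8) ^ n) := by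
      rw [hQdef]
      rw [cube_vol _ _ (by norm_num)]
      norm_num
    calc ENNReal.ofReal ((cφ * ‖c ℓ‖) ^ q * ((1:ℝ)/8) ^ n)
        = ENNReal.ofReal ((cφ * ‖c ℓ‖) ^ q) * ENNReal.ofReal (((1:ℝ)/8) ^ n) := by
          rw [ENNReal.ofReal_mul (by positivity)]
    _ = ENNReal.ofReal ((cφ * ‖c ℓ‖) ^ q) * volume (Q ℓ) := by rw [hvol]
    _ = ∫⁻ x in Q ℓ, ENNReal.ofReal ((cφ * ‖c ℓ‖) ^ q) := (setLIntegral_const _ _).symm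
    _ ≤ ∫⁻ x in Q ℓ, (‖STFT ⇑ψ f x (ξ - (2 * ε) • x)‖₊ : ℝ≥0∞) ^ q := by
          refine lintegral_mono_ae ?_
          rw [ae_restrict_iff' (by rw [hQdef]; exact cube_meas _ _)]
          exact Filter.Eventually.of_forall fun x hx => h1 ℓ hℓ ξ hξ x hx
    _ ≤ ∫⁻ x, (‖STFT ⇑ψ f x (ξ - (2 * ε) • x)‖₊ : ℝ≥0∞) ^ q :=
          lintegral_mono' Measure.restrict_le_self le_rfl
  -- Step 3: outer integral over R ℓ
  have h3 : ∀ ℓ ∈ c.support,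
      ENNReal.ofReal (((cφ * ‖c ℓ‖) ^ q * ((1:ℝ)/8) ^ n) ^ (p/q) * ((1:ℝ)/2) ^ n)
        ≤ ∫⁻ ξ in R ℓ,
            (∫⁻ x, (‖STFT ⇑ψ f x (ξ - (2 * ε) • x)‖₊ : ℝ≥0∞) ^ q) ^ (p/q) := by
    intro ℓ hℓ
    have hvol : volume (R ℓ) = ENNReal.ofReal (((1:ℝ)/2) ^ n) := by
      rw [hRdef]
      rw [cube_vol _ _ (by norm_num)]
      norm_num
    calc ENNReal.ofReal (((cφ * ‖c ℓ‖) ^ q * ((1:ℝ)/8) ^ n) ^ (p/q) * ((1:ℝ)/2) ^ n)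
        = ENNReal.ofReal (((cφ * ‖c ℓ‖) ^ q * ((1:ℝ)/8) ^ n) ^ (p/q)) * volume (R ℓ) := by
          rw [ENNReal.ofReal_mul (by positivity), hvol]
    _ = ∫⁻ ξ in R ℓ, ENNReal.ofReal (((cφ * ‖c ℓ‖) ^ q * ((1:ℝ)/8) ^ n) ^ (p/q)) :=
          (setLIntegral_const _ _).symm
    _ ≤ ∫⁻ ξ in R ℓ,
            (∫⁻ x, (‖STFT ⇑ψ f x (ξ - (2 * ε) • x)‖₊ : ℝ≥0∞) ^ q) ^ (p/q) := by
          refine lintegral_mono_ae ?_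
          rw [ae_restrict_iff' (by rw [hRdef]; exact cube_meas _ _)]
          refine Filter.Eventually.of_forall fun ξ hξ => ?_
          calc ENNReal.ofReal (((cφ * ‖c ℓ‖) ^ q * ((1:ℝ)/8) ^ n) ^ (p/q))
              = (ENNReal.ofReal ((cφ * ‖c ℓ‖) ^ q * ((1:ℝ)/8) ^ n)) ^ (p/q) := by
                rw [← ENNReal.ofReal_rpow_of_nonneg (by positivity) (by positivity)]
          _ ≤ _ := ENNReal.rpow_le_rpow (h2 ℓ hℓ ξ hξ) (by positivity)
  -- Step 4: disjointness of the R ℓ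
  have h4 : (↑c.support : Set (Fin n → ℤ)).PairwiseDisjoint R := by
    intro ℓ _ ℓ' _ hne
    refine Set.disjoint_left.mpr fun ξ hξ hξ' => ?_
    obtain ⟨i, hi⟩ : ∃ i, ℓ i ≠ ℓ' i := by
      by_contra hcon
      push_neg at hcon
      exact hne (funext hcon)
    have h1' := hξ i
    have h2' := hξ' i
    rw [hsmul, hz] at h1' h2'
    have hge : (2:ℝ) ≤ |2 * ε * (ℓ i : ℝ) - 2 * ε * (ℓ' i : ℝ)| := by
      have : 2 * ε * (ℓ i : ℝ) - 2 * ε * (ℓ' i : ℝ) = 2 * ε * ((ℓ i : ℝ) - (ℓ' i : ℝ)) := by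
        ring
      rw [this, abs_mul, abs_mul, hεabs, abs_two]
      have h5 : (1:ℝ) ≤ |(ℓ i : ℝ) - (ℓ' i : ℝ)| := by
        rw [← Int.cast_sub, ← Int.cast_abs]
        exact_mod_cast Int.one_le_abs (sub_ne_zero.mpr hi)
      linarith
    have := abs_sub (ξ i - 2 * ε * (ℓ' i : ℝ)) (ξ i - 2 * ε * (ℓ i : ℝ))
    have e : (ξ i - 2 * ε * (ℓ' i : ℝ)) - (ξ i - 2 * ε * (ℓ i : ℝ))
        = 2 * ε * (ℓ i : ℝ) - 2 * ε * (ℓ' i : ℝ) := by ring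
    rw [e] at this
    linarith
  -- Step 5: sum over lattice points
  have h5 : ∑ ℓ ∈ c.support, ∫⁻ ξ in R ℓ,
        (∫⁻ x, (‖STFT ⇑ψ f x (ξ - (2 * ε) • x)‖₊ : ℝ≥0∞) ^ q) ^ (p/q)
      ≤ ∫⁻ ξ, (∫⁻ x, (‖STFT ⇑ψ f x (ξ - (2 * ε) • x)‖₊ : ℝ≥0∞) ^ q) ^ (p/q) := by
    rw [← lintegral_biUnion_finset h4 (fun ℓ _ => by rw [hRdef]; exact cube_meas _ _)]
    exact lintegral_mono' Measure.restrict_le_self le_rfl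
  -- Step 6: real algebra and conclusion
  set S : ℝ := ∑ m ∈ c.support, ‖c m‖ ^ p with hS
  have hSnn : 0 ≤ S := Finset.sum_nonneg fun m _ => Real.rpow_nonneg (norm_nonneg _) p
  have h6 : ENNReal.ofReal (K * S)
      ≤ ∫⁻ ξ, (∫⁻ x, (‖STFT ⇑ψ f x (ξ - (2 * ε) • x)‖₊ : ℝ≥0∞) ^ q) ^ (p/q) := by
    have halg : ∀ ℓ : Fin n → ℤ,
        ((cφ * ‖c ℓ‖) ^ q * ((1:ℝ)/8) ^ n) ^ (p/q) * ((1:ℝ)/2) ^ n = K * ‖c ℓ‖ ^ p := by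
      intro ℓ
      rw [Real.mul_rpow (by positivity) (by positivity), ← Real.rpow_mul (by positivity)]
      have hqp : q * (p / q) = p := by field_simp
      rw [hqp, Real.mul_rpow hcφ.le (norm_nonneg _), hKdef]
      ring
    calc ENNReal.ofReal (K * S)
        = ∑ ℓ ∈ c.support,
            ENNReal.ofReal (((cφ * ‖c ℓ‖) ^ q * ((1:ℝ)/8) ^ n) ^ (p/q) * ((1:ℝ)/2) ^ n) := by
          rw [← ENNReal.ofReal_sum_of_nonneg (fun ℓ _ => by positivity)]
          congr 1
          rw [hS, Finset.mul_sum]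
          exact Finset.sum_congr rfl fun ℓ _ => (halg ℓ).symm
    _ ≤ ∑ ℓ ∈ c.support, ∫⁻ ξ in R ℓ,
          (∫⁻ x, (‖STFT ⇑ψ f x (ξ - (2 * ε) • x)‖₊ : ℝ≥0∞) ^ q) ^ (p/q) :=
          Finset.sum_le_sum h3
    _ ≤ _ := h5
  calc ENNReal.ofReal (K ^ (1/p) * S ^ (1/p))
      = ENNReal.ofReal ((K * S) ^ (1/p)) := by
        rw [Real.mul_rpow hKpos.le hSnn]
  _ = (ENNReal.ofReal (K * S)) ^ (1/p) := by
        rw [← ENNReal.ofReal_rpow_of_nonneg (by positivity) (by positivity)]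
  _ ≤ _ := ENNReal.rpow_le_rpow h6 (by positivity)

end
end

section
/- Let n ≥ 1, s ∈ ℝ and 1 ≤ p < q < ∞. Suppose there exists a constant C > 0 such that (Σ_{k∈ℤⁿ} |c_k|^p)^{1/p} ≤ C (Σ_{k∈ℤⁿ} ⟨k⟩^{sq} |c_k|^q)^{1/q} for every finitely supported sequence {c_k}_{k∈ℤⁿ} of complex numbers. Then s > n(1/p − 1/q). -/
open MeasureTheory Real
open scoped ENNReal RealInnerProductSpace

noncomputable section

lemma jp_base_pos {n : ℕ} (x : EuclideanSpace ℝ (Fin n)) : (0:ℝ) < 1 + ‖x‖^2 := by positivity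

lemma jp_pos {n : ℕ} (s : ℝ) (x : EuclideanSpace ℝ (Fin n)) : 0 < jp s x :=
  Real.rpow_pos_of_pos (jp_base_pos x) _

lemma jp_one_le_base {n : ℕ} (x : EuclideanSpace ℝ (Fin n)) : (1:ℝ) ≤ 1 + ‖x‖^2 := by
  nlinarith [sq_nonneg ‖x‖]

lemma jp_rpow {n : ℕ} (a b : ℝ) (x : EuclideanSpace ℝ (Fin n)) :
    jp a x ^ b = jp (a * b) x := by
  unfold jp
  rw [← Real.rpow_mul (jp_base_pos x).le]
  congr 1; ring

lemma jp_mul {n : ℕ} (a b : ℝ) (x : EuclideanSpace ℝ (Fin n)) :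
    jp a x * jp b x = jp (a + b) x := by
  unfold jp
  rw [← Real.rpow_add (jp_base_pos x)]
  congr 1; ring

lemma jp_mono {n : ℕ} {a b : ℝ} (h : a ≤ b) (x : EuclideanSpace ℝ (Fin n)) :
    jp a x ≤ jp b x :=
  Real.rpow_le_rpow_of_exponent_le (jp_one_le_base x) (by linarith)

lemma zlift_normsq {n : ℕ} (k : Fin n → ℤ) : ‖zlift k‖^2 = ∑ i, ((k i : ℝ))^2 := by
  rw [EuclideanSpace.norm_eq, Real.sq_sqrt (by positivity)]
  refine Finset.sum_congr rfl fun i _ => ?_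
  simp [zlift, WithLp.equiv_symm_apply, PiLp.toLp_apply, Real.norm_eq_abs, sq_abs]

/-- The dyadic annulus box. -/
def ann (n j : ℕ) : Finset (Fin n → ℤ) :=
  Fintype.piFinset fun _ => Finset.Ico ((2:ℤ)^j) (2^(j+1))

/-- The big box. -/
def box (n J : ℕ) : Finset (Fin n → ℤ) :=
  Fintype.piFinset fun _ => Finset.Ico (1:ℤ) (2^J)

lemma ann_card (n j : ℕ) : (ann n j).card = ((2:ℕ)^j)^n := by
  simp [ann, Int.card_Ico]
  congr 1
  have : (2:ℤ)^(j+1) - 2^j = 2^j := by ring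
  rw [this]
  rw [show ((2:ℤ)^j) = ((2^j : ℕ) : ℤ) by push_cast; ring, Int.toNat_natCast]

lemma ann_subset_box {n j J : ℕ} (h : j < J) : ann n j ⊆ box n J := by
  intro k hk
  simp only [ann, box, Fintype.mem_piFinset, Finset.mem_Ico] at hk ⊢
  intro i
  obtain ⟨h1, h2⟩ := hk i
  refine ⟨le_trans (one_le_pow₀ (by norm_num)) h1, lt_of_lt_of_le h2 ?_⟩
  exact pow_le_pow_right₀ (by norm_num) h

lemma ann_disjoint {n : ℕ} (hn : 1 ≤ n) {i j : ℕ} (h : i ≠ j) :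
    Disjoint (ann n i) (ann n j) := by
  rw [Finset.disjoint_left]
  intro k hki hkj
  simp only [ann, Fintype.mem_piFinset, Finset.mem_Ico] at hki hkj
  have h1 := hki ⟨0, hn⟩
  have h2 := hkj ⟨0, hn⟩
  rcases lt_or_gt_of_ne h with hij | hij
  · have : (2:ℤ)^(i+1) ≤ 2^j := pow_le_pow_right₀ (by norm_num) hij
    omega
  · have : (2:ℤ)^(j+1) ≤ 2^i := pow_le_pow_right₀ (by norm_num) hij
    omega

/-- Pointwise lower bound on the annulus. -/
lemma jp_ann_lb {n j : ℕ} (hn : 1 ≤ n) {k : Fin n → ℤ} (hk : k ∈ ann n j) :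
    (5*(n:ℝ))^(-(n:ℝ)/2) * (((2:ℝ)^j)^n)⁻¹ ≤ jp (-(n:ℝ)) (zlift k) := by
  simp only [ann, Fintype.mem_piFinset, Finset.mem_Ico] at hk
  have hbase : 1 + ‖zlift k‖^2 ≤ 5*n*4^j := by
    rw [zlift_normsq]
    have hterm : ∀ i ∈ Finset.univ, ((k i:ℝ))^2 ≤ 4*4^j := by
      intro i _
      obtain ⟨h1, h2⟩ := hk i
      have hk0 : (0:ℝ) ≤ (k i : ℝ) := by
        have : (0:ℤ) ≤ k i := le_trans (by positivity) h1
        exact_mod_cast this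
      have hk2 : (k i : ℝ) ≤ 2^(j+1) := by
        have : k i ≤ (2:ℤ)^(j+1) := h2.le
        exact_mod_cast this
      calc ((k i:ℝ))^2 ≤ ((2:ℝ)^(j+1))^2 := by nlinarith
        _ = 4*4^j := by
            rw [← pow_mul, show (j+1)*2 = 2+2*j by ring, pow_add, pow_mul]; norm_num
    have := Finset.sum_le_card_nsmul Finset.univ _ _ hterm
    simp only [Finset.card_univ, Fintype.card_fin, nsmul_eq_mul] at this
    have hn1 : (1:ℝ) ≤ n*4^j := by
      have : (1:ℝ) ≤ (n:ℝ) := by exact_mod_cast hn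
      have h4 : (1:ℝ) ≤ 4^j := one_le_pow₀ (by norm_num)
      nlinarith
    nlinarith
  have h1 : jp (-(n:ℝ)) (zlift k) = (1 + ‖zlift k‖^2)^(-(n:ℝ)/2) := rfl
  rw [h1]
  have h2 : ((5*(n:ℝ)*4^j))^(-(n:ℝ)/2) ≤ (1 + ‖zlift k‖^2)^(-(n:ℝ)/2) :=
    Real.rpow_le_rpow_of_nonpos (jp_base_pos _) hbase (by have : (0:ℝ) ≤ (n:ℝ) := Nat.cast_nonneg n; linarith)
  refine le_trans (le_of_eq ?_) h2
  have hn0 : (0:ℝ) ≤ 5*(n:ℝ) := by positivity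
  rw [Real.mul_rpow hn0 (by positivity)]
  congr 1
  -- (4^j)^(-n/2) = ((2^j)^n)⁻¹
  have h4 : ((4:ℝ)^j) = ((2:ℝ)^j)^(2:ℕ) := by
    rw [← pow_mul, mul_comm, pow_mul]; norm_num
  rw [h4, ← Real.rpow_natCast ((2:ℝ)^j) 2, ← Real.rpow_mul (by positivity),
    ← Real.rpow_natCast ((2:ℝ)^j) n, ← Real.rpow_neg (by positivity)]
  congr 1
  push_cast
  ring

/-- Divergence: the sum of jp(-n) over the box is at least J·δ. -/
lemma box_sum_lb (n J : ℕ) (hn : 1 ≤ n) :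
    (J:ℝ) * (5*(n:ℝ))^(-(n:ℝ)/2) ≤ ∑ k ∈ box n J, jp (-(n:ℝ)) (zlift k) := by
  set δ := (5*(n:ℝ))^(-(n:ℝ)/2) with hδ
  have hann : ∀ j, δ ≤ ∑ k ∈ ann n j, jp (-(n:ℝ)) (zlift k) := by
    intro j
    have := Finset.card_nsmul_le_sum (ann n j) (fun k => jp (-(n:ℝ)) (zlift k))
      (δ * (((2:ℝ)^j)^n)⁻¹) (fun k hk => jp_ann_lb hn hk)
    rw [ann_card, nsmul_eq_mul] at this
    refine le_trans (le_of_eq ?_) this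
    push_cast
    rw [← mul_assoc]
    rw [mul_comm (((2:ℝ)^j)^n : ℝ) δ, mul_assoc, mul_inv_cancel₀ (by positivity), mul_one]
  calc (J:ℝ) * δ = ∑ _j ∈ Finset.range J, δ := by
        rw [Finset.sum_const, Finset.card_range, nsmul_eq_mul]
    _ ≤ ∑ j ∈ Finset.range J, ∑ k ∈ ann n j, jp (-(n:ℝ)) (zlift k) :=
        Finset.sum_le_sum fun j _ => hann j
    _ = ∑ k ∈ (Finset.range J).biUnion (ann n), jp (-(n:ℝ)) (zlift k) :=
        (Finset.sum_biUnion (fun i _ j _ hij => ann_disjoint hn hij)).symm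
    _ ≤ ∑ k ∈ box n J, jp (-(n:ℝ)) (zlift k) := by
        refine Finset.sum_le_sum_of_subset_of_nonneg ?_ (fun k _ _ => (jp_pos _ _).le)
        intro k hk
        rw [Finset.mem_biUnion] at hk
        obtain ⟨j, hj, hkj⟩ := hk
        exact ann_subset_box (Finset.mem_range.mp hj) hkj

/-- If `1 ≤ p < q < ∞` and `(Σ_k |c_k|^p)^{1/p} ≲ (Σ_k ⟨k⟩^{sq} |c_k|^q)^{1/q}` holds for all
finitely supported sequences `{c_k}_{k ∈ ℤⁿ}`, then `s > n (1/p - 1/q)`. -/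

theorem sequence_ineq_necessary_condition (n : ℕ) (hn : 1 ≤ n) (s : ℝ) (p q : ℝ)
    (hp : 1 ≤ p) (hpq : p < q)
    (hineq : ∃ C : ℝ, 0 < C ∧ ∀ c : (Fin n → ℤ) →₀ ℂ,
      (∑ k ∈ c.support, ‖c k‖ ^ p) ^ (1 / p)
        ≤ C * (∑ k ∈ c.support, jp (s * q) (zlift k) * ‖c k‖ ^ q) ^ (1 / q)) :
    (n : ℝ) * (1 / p - 1 / q) < s := by
  by_contra hcon
  push_neg at hcon
  obtain ⟨C, hC, hCineq⟩ := hineq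
  have hp0 : (0:ℝ) < p := lt_of_lt_of_le one_pos hp
  have hq0 : (0:ℝ) < q := lt_trans hp0 hpq
  set e : ℝ := 1/p - 1/q with he
  have he0 : 0 < e := by
    rw [he, sub_pos]
    exact one_div_lt_one_div_of_lt hp0 hpq
  set t : ℝ := s + n/q with ht
  have ht1 : t ≤ n/p := by
    have hh : (n:ℝ)*(1/p-1/q) = n/p - n/q := by ring
    rw [ht]
    rw [hh] at hcon
    linarith
  have htp : t*p ≤ n := by
    calc t*p ≤ (n/p)*p := mul_le_mul_of_nonneg_right ht1 hp0.le
      _ = n := div_mul_cancel₀ _ hp0.ne'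
  have htq : t*q = s*q + n := by
    rw [ht, add_mul, div_mul_cancel₀ _ hq0.ne']
  set δ : ℝ := (5*(n:ℝ))^(-(n:ℝ)/2) with hδdef
  have hn0 : (0:ℝ) < 5*(n:ℝ) := by
    have : (1:ℝ) ≤ (n:ℝ) := by exact_mod_cast hn
    linarith
  have hδ : 0 < δ := Real.rpow_pos_of_pos hn0 _
  set M : ℝ := C^(1/e) with hMdef
  have hM0 : 0 < M := Real.rpow_pos_of_pos hC _
  set J : ℕ := ⌈(M+1)/δ⌉₊ with hJdef
  have hJ : M + 1 ≤ (J:ℝ) * δ := by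
    have h1 : (M+1)/δ ≤ (J : ℝ) := Nat.le_ceil _
    calc M+1 = ((M+1)/δ)*δ := (div_mul_cancel₀ _ hδ.ne').symm
      _ ≤ (J:ℝ)*δ := mul_le_mul_of_nonneg_right h1 hδ.le
  -- the test sequence
  set f : (Fin n → ℤ) → ℂ :=
    fun k => if k ∈ box n J then (jp (-t) (zlift k) : ℂ) else 0 with hf
  have hfs : ∀ k, f k ≠ 0 → k ∈ box n J := by
    intro k hk
    by_contra h
    rw [hf] at hk
    simp only [if_neg h] at hk
    exact hk rfl
  set c : (Fin n → ℤ) →₀ ℂ := Finsupp.onFinset (box n J) f hfs with hc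
  have hsupp : c.support = box n J := by
    ext k
    simp only [Finsupp.mem_support_iff, hc, Finsupp.onFinset_apply, hf]
    constructor
    · intro h
      by_contra hb
      simp only [if_neg hb] at h
      exact h rfl
    · intro hb
      rw [if_pos hb]
      exact_mod_cast (jp_pos (-t) (zlift k)).ne'
  have hck : ∀ k ∈ box n J, ‖c k‖ = jp (-t) (zlift k) := by
    intro k hk
    simp only [hc, Finsupp.onFinset_apply, hf, if_pos hk]
    rw [Complex.norm_real]
    exact abs_of_pos (jp_pos _ _)
  set S : ℝ := ∑ k ∈ box n J, jp (-(n:ℝ)) (zlift k) with hSdef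
  have hS : M + 1 ≤ S := le_trans hJ (box_sum_lb n J hn)
  have hS0 : 0 < S := lt_of_lt_of_le (by linarith) hS
  have hL : S ≤ ∑ k ∈ box n J, ‖c k‖ ^ p := by
    refine Finset.sum_le_sum fun k hk => ?_
    rw [hck k hk, jp_rpow]
    refine jp_mono ?_ _
    rw [neg_mul]
    linarith
  have hR : ∀ k ∈ box n J, jp (s*q) (zlift k) * ‖c k‖ ^ q = jp (-(n:ℝ)) (zlift k) := by
    intro k hk
    rw [hck k hk, jp_rpow, jp_mul]
    congr 1
    rw [neg_mul]
    rw [htq]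
    ring
  have key := hCineq c
  rw [hsupp, Finset.sum_congr rfl hR, ← hSdef] at key
  have h5 : S^(1/p) ≤ C * S^(1/q) :=
    le_trans (Real.rpow_le_rpow hS0.le hL (by positivity)) key
  have h6 : S^e ≤ C := by
    have hsplit : S^(1/p) = S^e * S^(1/q) := by
      rw [← Real.rpow_add hS0]
      congr 1
      rw [he]; ring
    rw [hsplit] at h5
    have hq' : 0 < S^(1/q) := Real.rpow_pos_of_pos hS0 _
    exact le_of_mul_le_mul_right h5 hq'
  have h7 : C < S^e := by
    have hMS : M < S := by linarith
    have hlt : M^e < S^e := Real.rpow_lt_rpow hM0.le hMS he0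
    rwa [hMdef, ← Real.rpow_mul hC.le, one_div_mul_cancel he0.ne', Real.rpow_one] at hlt
  linarith

end
end
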